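/- arXiv:1207.0562 — 2 statements merged into one kernel-verified Lean document; each statement's English description precedes it below -/
import Mathlib

section
/- Let Λ be a commutative ring, I = ⟨ν⟩ a principal ideal, R = Λ/I, φ : T = Λ[x₁,…,x_n] → A = R[x₁,…,x_n] the coefficientwise reduction. Let G be a strong Gröbner basis of an ideal J of T containing the constant polynomial ν, and assume each g ∈ G \ {ν} has leading coefficient not in I. Then Ḡ = φ(G) \ {0} is a strong Gröbner basis of φ(J): for every nonzero f̄ ∈ φ(J) there exist λ̄ ∈ R, a monomial x^α, and ḡ ∈ Ḡ with LT(f̄) = λ̄·x^α·LT(ḡ). -/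
/-- The leading exponent (leading monomial) of `f` w.r.t. the monomial order `m`. -/
noncomputable def mdeg {σ R : Type*} [CommSemiring R] (m : MonomialOrder σ)
    (f : MvPolynomial σ R) : σ →₀ ℕ :=
  m.toSyn.symm (f.support.sup fun d => m.toSyn d)

/-- The leading coefficient of `f` w.r.t. the monomial order `m`. -/
noncomputable def mlc {σ R : Type*} [CommSemiring R] (m : MonomialOrder σ)
    (f : MvPolynomial σ R) : R :=
  MvPolynomial.coeff (mdeg m f) f

/-- The leading term of `f` w.r.t. the monomial order `m`. -/
noncomputable def mlt {σ R : Type*} [CommSemiring R] (m : MonomialOrder σ)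
    (f : MvPolynomial σ R) : MvPolynomial σ R :=
  MvPolynomial.monomial (mdeg m f) (mlc m f)

section Aux

variable {σ R : Type*} [CommSemiring R] (m : MonomialOrder σ)

lemma mdeg_le_of_mem {f : MvPolynomial σ R} {d : σ →₀ ℕ} (hd : d ∈ f.support) :
    m.toSyn d ≤ m.toSyn (mdeg m f) := by
  rw [mdeg, AddEquiv.apply_symm_apply]
  exact Finset.le_sup hd

lemma mdeg_mem_support {f : MvPolynomial σ R} (hf : f ≠ 0) :
    mdeg m f ∈ f.support := by
  have hne : f.support.Nonempty := MvPolynomial.support_nonempty.mpr hf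
  obtain ⟨d, hd, hds⟩ := Finset.exists_mem_eq_sup f.support hne (fun d => m.toSyn d)
  rw [mdeg, hds, AddEquiv.symm_apply_apply]
  exact hd

lemma mlc_ne_zero {f : MvPolynomial σ R} (hf : f ≠ 0) : mlc m f ≠ 0 :=
  MvPolynomial.mem_support_iff.mp (mdeg_mem_support m hf)

lemma mdeg_eq_of_max {f : MvPolynomial σ R} {d : σ →₀ ℕ} (hd : d ∈ f.support)
    (hmax : ∀ e ∈ f.support, m.toSyn e ≤ m.toSyn d) : mdeg m f = d := by
  have hf : f ≠ 0 := fun h => by simp [h] at hd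
  have h1 := mdeg_le_of_mem m hd
  have h2 := hmax _ (mdeg_mem_support m hf)
  exact m.toSyn.injective (le_antisymm h2 h1)

/-- If the leading coefficient survives a coefficientwise ring hom, then the leading
exponent and coefficient are preserved. -/
lemma mdeg_map_eq {S : Type*} [CommSemiring S] (ψ : R →+* S) {f : MvPolynomial σ R}
    (h : ψ (mlc m f) ≠ 0) :
    mdeg m (MvPolynomial.map ψ f) = mdeg m f ∧ mlc m (MvPolynomial.map ψ f) = ψ (mlc m f) := by
  have hmem : mdeg m f ∈ (MvPolynomial.map ψ f).support := by
    rw [MvPolynomial.mem_support_iff, MvPolynomial.coeff_map]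
    exact h
  have hdeg : mdeg m (MvPolynomial.map ψ f) = mdeg m f := by
    apply mdeg_eq_of_max m hmem
    intro e he
    apply mdeg_le_of_mem
    rw [MvPolynomial.mem_support_iff] at he ⊢
    intro h0
    exact he (by rw [MvPolynomial.coeff_map, h0, map_zero])
  refine ⟨hdeg, ?_⟩
  rw [mlc, hdeg, MvPolynomial.coeff_map]
  rfl

end Aux

/-- for `I = ⟨ν⟩` principal, a strong Gröbner basis `G` of an ideal
`J ⊆ Λ[x]` containing the constant `ν`, all of whose elements other than `ν` have
leading coefficient outside `I`, reduces to a strong Gröbner basis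
`φ(G) \ {0}` of `φ(J) ⊆ (Λ/I)[x]`. -/
theorem stmt14 {Λ : Type*} [CommRing Λ] {n t : ℕ}
    (m : MonomialOrder (Fin n)) (ν : Λ) (I : Ideal Λ) (hI : I = Ideal.span {ν})
    (J : Ideal (MvPolynomial (Fin n) Λ)) (hνJ : MvPolynomial.C ν ∈ J)
    (G : Fin t → MvPolynomial (Fin n) Λ)
    (hGJ : ∀ i, G i ∈ J) (hG0 : ∀ i, G i ≠ 0)
    (hstrong : ∀ f ∈ J, f ≠ 0 →
      ∃ (c : Λ) (α : Fin n →₀ ℕ) (i : Fin t),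
        mlt m f = MvPolynomial.monomial α c * mlt m (G i))
    (hlc : ∀ i, G i ≠ MvPolynomial.C ν → mlc m (G i) ∉ I) :
    ∀ fbar ∈ Ideal.map (MvPolynomial.map (Ideal.Quotient.mk I)) J, fbar ≠ 0 →
      ∃ (c : Λ ⧸ I) (α : Fin n →₀ ℕ) (g : MvPolynomial (Fin n) (Λ ⧸ I)),
        g ∈ (MvPolynomial.map (Ideal.Quotient.mk I) '' Set.range G) \ {0} ∧
        mlt m fbar = MvPolynomial.monomial α c * mlt m g := by
  intro fbar hfbar hfbar0
  set φ := MvPolynomial.map (σ := Fin n) (Ideal.Quotient.mk I) with hφ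
  have hνI : ν ∈ I := by rw [hI]; exact Ideal.mem_span_singleton_self ν
  have hsurj : Function.Surjective φ := MvPolynomial.map_surjective _ Ideal.Quotient.mk_surjective
  rw [Ideal.mem_map_iff_of_surjective _ hsurj] at hfbar
  obtain ⟨f, hfJ, hfeq⟩ := hfbar
  -- well-founded induction on the leading exponent of a preimage
  have key : ∀ s : m.syn, ∀ f ∈ J, φ f = fbar → m.toSyn (mdeg m f) = s →
      ∃ (c : Λ ⧸ I) (α : Fin n →₀ ℕ) (g : MvPolynomial (Fin n) (Λ ⧸ I)),
        g ∈ (φ '' Set.range G) \ {0} ∧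
        mlt m fbar = MvPolynomial.monomial α c * mlt m g := by
    intro s
    induction s using WellFoundedLT.induction with
    | ind s IH =>
    intro f hfJ hfeq hfs
    have hf0 : f ≠ 0 := by rintro rfl; exact hfbar0 (by simp [← hfeq, hφ])
    by_cases hlcI : mlc m f ∈ I
    · -- leading coefficient dies; subtract the leading term and recurse
      obtain ⟨a, ha⟩ := Ideal.mem_span_singleton'.mp (hI ▸ hlcI)
      set f' := f - mlt m f with hf'
      have hltJ : mlt m f ∈ J := by
        have : mlt m f = MvPolynomial.monomial (mdeg m f) a * MvPolynomial.C ν := by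
          rw [mlt, MvPolynomial.C_apply, MvPolynomial.monomial_mul, add_zero, ha]
        rw [this]
        exact J.mul_mem_left _ hνJ
      have hf'J : f' ∈ J := J.sub_mem hfJ hltJ
      have hφlt : φ (mlt m f) = 0 := by
        rw [mlt, hφ, MvPolynomial.map_monomial]
        rw [Ideal.Quotient.eq_zero_iff_mem.mpr hlcI, MvPolynomial.monomial_zero]
      have hf'eq : φ f' = fbar := by
        rw [hf', map_sub, hφlt, sub_zero, hfeq]
      have hf'0 : f' ≠ 0 := by rintro h; exact hfbar0 (by rw [← hf'eq, h, map_zero])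
      have hsupp : ∀ d ∈ f'.support, m.toSyn d < m.toSyn (mdeg m f) := by
        intro d hd
        rw [MvPolynomial.mem_support_iff, hf', MvPolynomial.coeff_sub, mlt,
          MvPolynomial.coeff_monomial] at hd
        by_cases hdd : d = mdeg m f
        · exact absurd (by rw [hdd, if_pos rfl, mlc, sub_self]) hd
        · rw [if_neg (Ne.symm hdd), sub_zero] at hd
          refine lt_of_le_of_ne (mdeg_le_of_mem m (MvPolynomial.mem_support_iff.mpr hd)) ?_
          exact fun h => hdd (m.toSyn.injective h)
      have hlt : m.toSyn (mdeg m f') < s := by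
        rw [← hfs]
        exact hsupp _ (mdeg_mem_support m hf'0)
      exact IH _ hlt f' hf'J hf'eq rfl
    · -- leading coefficient survives
      have hlcbar : Ideal.Quotient.mk I (mlc m f) ≠ 0 :=
        fun h => hlcI (Ideal.Quotient.eq_zero_iff_mem.mp h)
      obtain ⟨hdegf, hlcf⟩ := mdeg_map_eq m (Ideal.Quotient.mk I) hlcbar
      obtain ⟨c, α, i, heq⟩ := hstrong f hfJ hf0
      -- unpack the monomial equation
      rw [mlt, mlt, MvPolynomial.monomial_mul] at heq
      rw [MvPolynomial.monomial_eq_monomial_iff] at heq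
      rcases heq with ⟨hdeq, hceq⟩ | ⟨hc0, hc02⟩
      · have hGine : G i ≠ MvPolynomial.C ν := by
          rintro hGi
          apply hlcI
          have hν0 : ν ≠ 0 := fun h => hG0 i (by rw [hGi, h, map_zero])
          have : mlc m (G i) = ν := by
            rw [hGi]
            have hd : mdeg m (MvPolynomial.C ν : MvPolynomial (Fin n) Λ) = 0 := by
              apply mdeg_eq_of_max
              · rw [MvPolynomial.mem_support_iff, MvPolynomial.coeff_C, if_pos rfl]
                exact hν0
              · intro e he
                rw [MvPolynomial.mem_support_iff, MvPolynomial.coeff_C] at he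
                rcases eq_or_ne (0 : Fin n →₀ ℕ) e with h | h
                · rw [← h]
                · simp [if_neg h] at he
            rw [mlc, hd, MvPolynomial.coeff_C, if_pos rfl]
          rw [hceq, this, hI]
          exact Ideal.mul_mem_left _ _ (Ideal.mem_span_singleton_self ν)
        have hlcGi : mlc m (G i) ∉ I := hlc i hGine
        have hlcGibar : Ideal.Quotient.mk I (mlc m (G i)) ≠ 0 :=
          fun h => hlcGi (Ideal.Quotient.eq_zero_iff_mem.mp h)
        obtain ⟨hdegGi, hlcGib⟩ := mdeg_map_eq m (Ideal.Quotient.mk I) hlcGibar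
        refine ⟨Ideal.Quotient.mk I c, α, φ (G i), ⟨⟨G i, ⟨i, rfl⟩, rfl⟩, ?_⟩, ?_⟩
        · intro h
          rw [Set.mem_singleton_iff] at h
          exact hlcGibar (by rw [← hlcGib, mlc, h, MvPolynomial.coeff_zero])
        · rw [mlt, mlt, ← hfeq, hdegf, hlcf, hdegGi, hlcGib,
            MvPolynomial.monomial_mul, hdeq, hceq, map_mul]
      · exact absurd hc0 (mlc_ne_zero m hf0)
  exact key _ f hfJ hfeq rfl
end

section
/- Let K be a field and K[y] the polynomial ring in one variable y. A finite set G = {g₁,…,g_m} of nonzero polynomials in T = K[y,x₁,…,x_n] is a Gröbner basis (over the field K) with respect to an elimination order with the x variables larger than y if and only if G is a strong Gröbner basis in Q = (K[y])[x₁,…,x_n]: for every nonzero f in the ideal generated by G, there exist h ∈ K[y], a monomial x^α, and gᵢ ∈ G with LT_x(f) = h·x^α·LT_x(gᵢ). -/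
open MvPolynomial
open Finsupp (sumFinsuppEquivProdFinsupp)
open scoped MonomialOrder

lemma mlt_eq_leadingTerm {σ R : Type*} [CommSemiring R] (m : MonomialOrder σ) :
    mlt (R := R) m = m.leadingTerm :=
  rfl

def IsGroebnerBasis {σ R : Type*} [CommSemiring R] (m : MonomialOrder σ)
    (J : Ideal (MvPolynomial σ R)) (B : Set (MvPolynomial σ R)) : Prop :=
  Ideal.span (m.leadingTerm '' {f | f ∈ J ∧ f ≠ 0}) = Ideal.span (m.leadingTerm '' B)

def IsStrongGroebnerBasis {σ R : Type*} [CommSemiring R] (m : MonomialOrder σ)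
    (J : Ideal (MvPolynomial σ R)) (B : Set (MvPolynomial σ R)) : Prop :=
  ∀ F ∈ J, F ≠ 0 → ∃ (h : R) (α : σ →₀ ℕ), ∃ b ∈ B,
    m.leadingTerm F = monomial α h * m.leadingTerm b

section SumAlgEquiv
variable {σ τ R : Type*} [CommSemiring R]

theorem Finsupp.sumFinsuppEquivProdFinsupp_le_iff {u v : σ ⊕ τ →₀ ℕ} :
    sumFinsuppEquivProdFinsupp u ≤ sumFinsuppEquivProdFinsupp v ↔ u ≤ v := by
  simp [Prod.le_def, Finsupp.le_def, Sum.forall]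

theorem MvPolynomial.sumAlgEquiv_monomial (d : σ ⊕ τ →₀ ℕ) (c : R) :
    sumAlgEquiv R σ τ (monomial d c) =
      monomial (sumFinsuppEquivProdFinsupp d).1
        (monomial (sumFinsuppEquivProdFinsupp d).2 c) := by
  simp [sumAlgEquiv, monomial]

theorem MvPolynomial.coeff_coeff_sumAlgEquiv (f : MvPolynomial (σ ⊕ τ) R) (e : σ ⊕ τ →₀ ℕ) :
    ((sumAlgEquiv R σ τ f).coeff (sumFinsuppEquivProdFinsupp e).1).coeff
      (sumFinsuppEquivProdFinsupp e).2 = f.coeff e := by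
  classical
  induction f using MvPolynomial.induction_on' with
  | monomial d c =>
    simp only [sumAlgEquiv_monomial, coeff_monomial]
    by_cases hd : d = e
    · simp [hd]
    · have : ¬(sumFinsuppEquivProdFinsupp d = sumFinsuppEquivProdFinsupp e) :=
        fun h => hd (sumFinsuppEquivProdFinsupp.injective h)
      rw [Prod.ext_iff] at this
      split_ifs <;> simp_all
  | add p q hp hq => simp only [map_add, coeff_add, hp, hq]

end SumAlgEquiv

namespace MonomialOrder

section Semiring
variable {σ R : Type*} [CommSemiring R] (m : MonomialOrder σ)

theorem degree_eq_of_coeff_ne_zero {f : MvPolynomial σ R} {d : σ →₀ ℕ} (hd : f.coeff d ≠ 0)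
    (h : ∀ c ∈ f.support, c ≼[m] d) : m.degree f = d :=
  m.toSyn.injective (le_antisymm (m.degree_le_iff.mpr h) (m.le_degree (mem_support_iff.mpr hd)))

/-- Together with `0`, the leading coefficients of the elements of `I` of degree `a`. -/
def leadingCoeffIdeal (I : Ideal (MvPolynomial σ R)) (a : σ →₀ ℕ) : Ideal R where
  carrier := {c | ∃ p ∈ I, (∀ e ∈ p.support, e ≼[m] a) ∧ p.coeff a = c}
  add_mem' := by
    classical
    rintro _ _ ⟨p, hp, hpa, rfl⟩ ⟨q, hq, hqa, rfl⟩
    refine ⟨p + q, I.add_mem hp hq, fun e he => ?_, coeff_add _ _ _⟩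
    rcases Finset.mem_union.mp (support_add he) with he | he
    exacts [hpa e he, hqa e he]
  zero_mem' := ⟨0, I.zero_mem, by simp, coeff_zero _⟩
  smul_mem' := by
    rintro c _ ⟨p, hp, hpa, rfl⟩
    refine ⟨c • p, ?_, fun e he => hpa e (support_smul he), coeff_smul _ _ _⟩
    rw [smul_eq_C_mul]
    exact I.mul_mem_left _ hp

theorem mem_leadingCoeffIdeal {I : Ideal (MvPolynomial σ R)} {a : σ →₀ ℕ} {c : R} :
    c ∈ m.leadingCoeffIdeal I a ↔ ∃ p ∈ I, (∀ e ∈ p.support, e ≼[m] a) ∧ p.coeff a = c :=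
  Iff.rfl

variable {m}

theorem leadingCoeff_mem_leadingCoeffIdeal {I : Ideal (MvPolynomial σ R)} {p : MvPolynomial σ R}
    {a : σ →₀ ℕ} (hp : p ∈ I) (ha : m.degree p ≤ a) :
    m.leadingCoeff p ∈ m.leadingCoeffIdeal I a := by
  set s := a - m.degree p
  have hs : s + m.degree p = a := tsub_add_cancel_of_le ha
  refine m.mem_leadingCoeffIdeal.mpr ⟨monomial s 1 * p, I.mul_mem_left _ hp, fun e he => ?_, ?_⟩
  · calc m.toSyn e ≤ m.toSyn (m.degree (monomial s 1 * p)) := m.le_degree he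
      _ ≤ m.toSyn (m.degree (monomial s (1 : R)) + m.degree p) := m.degree_mul_le
      _ ≤ m.toSyn (s + m.degree p) := by
        rw [map_add, map_add]
        exact add_le_add (m.degree_monomial_le 1) le_rfl
      _ = m.toSyn a := by rw [hs]
  · rw [← hs, coeff_monomial_mul, one_mul, leadingCoeff]

theorem exists_degree_eq_of_mem_leadingCoeffIdeal {I : Ideal (MvPolynomial σ R)} {a : σ →₀ ℕ}
    {c : R} (hc : c ∈ m.leadingCoeffIdeal I a) (hc0 : c ≠ 0) :
    ∃ p ∈ I, m.degree p = a ∧ m.leadingCoeff p = c := by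
  obtain ⟨p, hp, hpa, rfl⟩ := m.mem_leadingCoeffIdeal.mp hc
  have hdeg := m.degree_eq_of_coeff_ne_zero hc0 hpa
  exact ⟨p, hp, hdeg, by rw [leadingCoeff, hdeg]⟩

end Semiring

theorem exists_degree_le_of_leadingTerm_mem_span {σ k : Type*} [Field k] {m : MonomialOrder σ}
    {B : Set (MvPolynomial σ k)} {p : MvPolynomial σ k} (hp : p ≠ 0)
    (h : m.leadingTerm p ∈ Ideal.span (m.leadingTerm '' B)) :
    ∃ b ∈ B, b ≠ 0 ∧ m.degree b ≤ m.degree p := by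
  rw [span_leadingTerm_eq_span_monomial', ← Set.image_image (fun s => monomial s (1 : k)),
    mem_ideal_span_monomial_image] at h
  obtain ⟨_, ⟨b, ⟨hb, hb0⟩, rfl⟩, hle⟩ :=
    h (m.degree p) (by rw [support_leadingTerm' hp]; exact Finset.mem_singleton_self _)
  exact ⟨b, hb, hb0, hle⟩

section OneVariable
variable {τ k : Type*} [Subsingleton τ] [Field k] {m : MonomialOrder τ}

theorem toSyn_lt_of_not_le {a b : τ →₀ ℕ} (h : ¬a ≤ b) : b ≺[m] a := by
  obtain ⟨i, hi⟩ := not_forall.mp (mt Finsupp.le_def.mpr h)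
  have hba : b ≤ a := Finsupp.le_def.mpr fun j => Subsingleton.elim i j ▸ (not_le.mp hi).le
  exact lt_of_le_of_ne (m.toSyn_monotone hba) fun heq => h (m.toSyn.injective heq ▸ le_rfl)

theorem dvd_of_mem_of_degree_minimal {I : Ideal (MvPolynomial τ k)} {d c : MvPolynomial τ k}
    (hd : d ∈ I) (hd0 : d ≠ 0) (hmin : ∀ p ∈ I, p ≠ 0 → m.degree d ≼[m] m.degree p)
    (hc : c ∈ I) : d ∣ c := by
  obtain ⟨q, r, hcr, -, hr⟩ :=
    m.div_single (isUnit_iff_ne_zero.mpr (m.leadingCoeff_ne_zero_iff.mpr hd0)) c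
  have hrI : r ∈ I := by
    rw [eq_sub_of_add_eq' hcr.symm]
    exact I.sub_mem hc (I.mul_mem_left q hd)
  obtain rfl : r = 0 := by
    by_contra hr0
    exact not_lt_of_ge (hmin r hrI hr0) (toSyn_lt_of_not_le (hr _ (m.degree_mem_support hr0)))
  exact ⟨q, by rw [hcr, add_zero, mul_comm]⟩

end OneVariable

section ProdLex
variable {σ τ R : Type*} [CommSemiring R]

def IsProdLex (mo : MonomialOrder (σ ⊕ τ)) (mx : MonomialOrder σ) (my : MonomialOrder τ) :
    Prop :=
  ∀ a b : σ ⊕ τ →₀ ℕ, a ≺[mo] b ↔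
    (sumFinsuppEquivProdFinsupp a).1 ≺[mx] (sumFinsuppEquivProdFinsupp b).1 ∨
      ((sumFinsuppEquivProdFinsupp a).1 = (sumFinsuppEquivProdFinsupp b).1 ∧
        (sumFinsuppEquivProdFinsupp a).2 ≺[my] (sumFinsuppEquivProdFinsupp b).2)

namespace IsProdLex
variable {mo : MonomialOrder (σ ⊕ τ)} {mx : MonomialOrder σ} {my : MonomialOrder τ}

theorem lex_le_of_le (h : IsProdLex mo mx my) {e D : σ ⊕ τ →₀ ℕ} (hle : e ≼[mo] D) :
    (sumFinsuppEquivProdFinsupp e).1 ≼[mx] (sumFinsuppEquivProdFinsupp D).1 ∧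
      ((sumFinsuppEquivProdFinsupp e).1 = (sumFinsuppEquivProdFinsupp D).1 →
        (sumFinsuppEquivProdFinsupp e).2 ≼[my] (sumFinsuppEquivProdFinsupp D).2) := by
  have := (h D e).not.mp (not_lt.mpr hle)
  push Not at this
  exact ⟨this.1, fun heq => this.2 heq.symm⟩

theorem sumFinsuppEquivProdFinsupp_degree (h : IsProdLex mo mx my) (f : MvPolynomial (σ ⊕ τ) R) :
    sumFinsuppEquivProdFinsupp (mo.degree f) =
      (mx.degree (sumAlgEquiv R σ τ f), my.degree (mx.leadingCoeff (sumAlgEquiv R σ τ f))) := by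
  rcases eq_or_ne f 0 with rfl | hf
  · ext <;> simp
  set D := sumFinsuppEquivProdFinsupp (mo.degree f)
  have hcoeff (α : σ →₀ ℕ) (β : τ →₀ ℕ) : ((sumAlgEquiv R σ τ f).coeff α).coeff β =
      f.coeff (sumFinsuppEquivProdFinsupp.symm (α, β)) := by
    simpa using coeff_coeff_sumAlgEquiv f (sumFinsuppEquivProdFinsupp.symm (α, β))
  have hle {α : σ →₀ ℕ} {β : τ →₀ ℕ} (hαβ : ((sumAlgEquiv R σ τ f).coeff α).coeff β ≠ 0) :
      α ≼[mx] D.1 ∧ (α = D.1 → β ≼[my] D.2) := by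
    have := h.lex_le_of_le (e := sumFinsuppEquivProdFinsupp.symm (α, β))
      (mo.le_degree (mem_support_iff.mpr (hcoeff α β ▸ hαβ)))
    rwa [Equiv.apply_symm_apply] at this
  have hDy : ((sumAlgEquiv R σ τ f).coeff D.1).coeff D.2 ≠ 0 := by
    rw [coeff_coeff_sumAlgEquiv]
    exact mo.coeff_degree_ne_zero_iff.mpr hf
  have hx : mx.degree (sumAlgEquiv R σ τ f) = D.1 := by
    refine mx.degree_eq_of_coeff_ne_zero (fun h0 => hDy (by rw [h0, coeff_zero])) fun α hα => ?_
    obtain ⟨β, hβ⟩ := support_nonempty.mpr (mem_support_iff.mp hα)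
    exact (hle (mem_support_iff.mp hβ)).1
  have hy : my.degree ((sumAlgEquiv R σ τ f).coeff D.1) = D.2 := by
    refine my.degree_eq_of_coeff_ne_zero hDy fun β hβ => ?_
    exact (hle (mem_support_iff.mp hβ)).2 rfl
  rw [leadingCoeff, hx, hy]

theorem leadingCoeff_leadingCoeff_sumAlgEquiv (h : IsProdLex mo mx my)
    (f : MvPolynomial (σ ⊕ τ) R) :
    my.leadingCoeff (mx.leadingCoeff (sumAlgEquiv R σ τ f)) = mo.leadingCoeff f := by
  have := coeff_coeff_sumAlgEquiv f (mo.degree f)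
  rw [h.sumFinsuppEquivProdFinsupp_degree] at this
  exact this

theorem sumAlgEquiv_leadingTerm (h : IsProdLex mo mx my) (f : MvPolynomial (σ ⊕ τ) R) :
    sumAlgEquiv R σ τ (mo.leadingTerm f) =
      monomial (mx.degree (sumAlgEquiv R σ τ f))
        (my.leadingTerm (mx.leadingCoeff (sumAlgEquiv R σ τ f))) := by
  rw [leadingTerm, sumAlgEquiv_monomial, h.sumFinsuppEquivProdFinsupp_degree,
    ← h.leadingCoeff_leadingCoeff_sumAlgEquiv]
  rfl

theorem leadingTerm_eq_mul [NoZeroDivisors R] (h : IsProdLex mo mx my)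
    {f b : MvPolynomial (σ ⊕ τ) R} {α : σ →₀ ℕ} {c : MvPolynomial τ R} (hf : f ≠ 0)
    (hfb : mx.leadingTerm (sumAlgEquiv R σ τ f) =
      monomial α c * mx.leadingTerm (sumAlgEquiv R σ τ b)) :
    mo.leadingTerm f =
      (sumAlgEquiv R σ τ).symm (monomial α (my.leadingTerm c)) * mo.leadingTerm b := by
  apply (sumAlgEquiv R σ τ).injective
  rw [map_mul, AlgEquiv.apply_symm_apply, h.sumAlgEquiv_leadingTerm, h.sumAlgEquiv_leadingTerm,
    monomial_mul]
  rw [leadingTerm, leadingTerm, monomial_mul, monomial_eq_monomial_iff] at hfb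
  have hf' : mx.leadingCoeff (sumAlgEquiv R σ τ f) ≠ 0 :=
    mx.leadingCoeff_ne_zero_iff.mpr ((map_ne_zero_iff _ (sumAlgEquiv R σ τ).injective).mpr hf)
  obtain ⟨hdeg, hlc⟩ := hfb.resolve_right fun h0 => hf' h0.1
  rw [hdeg, hlc, leadingTerm_mul]

theorem isGroebnerBasis_of_isStrongGroebnerBasis_map [NoZeroDivisors R] (h : IsProdLex mo mx my)
    {J : Ideal (MvPolynomial (σ ⊕ τ) R)} {B : Set (MvPolynomial (σ ⊕ τ) R)} (hB : B ⊆ J)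
    (hS : IsStrongGroebnerBasis mx (J.map (sumAlgEquiv R σ τ)) (sumAlgEquiv R σ τ '' B)) :
    IsGroebnerBasis mo J B := by
  refine le_antisymm (Ideal.span_le.mpr ?_) (Ideal.span_le.mpr ?_)
  · rintro _ ⟨f, ⟨hfJ, hf0⟩, rfl⟩
    obtain ⟨c, α, _, ⟨b, hb, rfl⟩, hfb⟩ := hS _ (Ideal.mem_map_of_mem _ hfJ)
      ((map_ne_zero_iff _ (sumAlgEquiv R σ τ).injective).mpr hf0)
    rw [SetLike.mem_coe, h.leadingTerm_eq_mul hf0 hfb]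
    exact Ideal.mul_mem_left _ _ (Ideal.subset_span ⟨b, hb, rfl⟩)
  · rintro _ ⟨b, hb, rfl⟩
    rcases eq_or_ne b 0 with rfl | hb0
    · rw [leadingTerm_zero]
      exact zero_mem _
    · exact Ideal.subset_span ⟨b, ⟨hB hb, hb0⟩, rfl⟩

end IsProdLex

end ProdLex

namespace IsProdLex
variable {σ τ K : Type*} [Field K] [Subsingleton τ]
  {mo : MonomialOrder (σ ⊕ τ)} {mx : MonomialOrder σ} {my : MonomialOrder τ}

theorem isStrongGroebnerBasis_map (h : IsProdLex mo mx my)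
    {J : Ideal (MvPolynomial (σ ⊕ τ) K)} {B : Set (MvPolynomial (σ ⊕ τ) K)} (hB : B ⊆ J)
    (hG : IsGroebnerBasis mo J B) :
    IsStrongGroebnerBasis mx (J.map (sumAlgEquiv K σ τ)) (sumAlgEquiv K σ τ '' B) := by
  intro F hF hF0
  set a := mx.degree F
  set L := mx.leadingCoeffIdeal (J.map (sumAlgEquiv K σ τ)) a
  have hFL : mx.leadingCoeff F ∈ L := leadingCoeff_mem_leadingCoeffIdeal hF le_rfl
  obtain ⟨d, ⟨hdL, hd0⟩, hmin⟩ :=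
    (InvImage.wf (fun p => my.toSyn (my.degree p)) wellFounded_lt).has_min {p | p ∈ L ∧ p ≠ 0}
      ⟨_, hFL, mx.leadingCoeff_ne_zero_iff.mpr hF0⟩
  obtain ⟨_, hp, hpa, rfl⟩ := exists_degree_eq_of_mem_leadingCoeffIdeal hdL hd0
  obtain ⟨f, hf, rfl⟩ := (Ideal.mem_map_of_equiv _ _).mp hp
  have hf0 : f ≠ 0 := by
    rintro rfl
    simp at hd0
  obtain ⟨b, hbB, hb0, hbf⟩ := exists_degree_le_of_leadingTerm_mem_span hf0
    (Eq.le hG (Ideal.subset_span ⟨f, ⟨hf, hf0⟩, rfl⟩))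
  rw [← Finsupp.sumFinsuppEquivProdFinsupp_le_iff, h.sumFinsuppEquivProdFinsupp_degree,
    h.sumFinsuppEquivProdFinsupp_degree, hpa, Prod.mk_le_mk] at hbf
  obtain ⟨hba, hbd⟩ := hbf
  have hbL : mx.leadingCoeff (sumAlgEquiv K σ τ b) ∈ L :=
    leadingCoeff_mem_leadingCoeffIdeal (Ideal.mem_map_of_mem _ (hB hbB)) hba
  have hb0' : mx.leadingCoeff (sumAlgEquiv K σ τ b) ≠ 0 :=
    mx.leadingCoeff_ne_zero_iff.mpr ((map_ne_zero_iff _ (sumAlgEquiv K σ τ).injective).mpr hb0)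
  obtain ⟨q, hq⟩ := dvd_of_mem_of_degree_minimal hbL hb0'
    (fun r hr hr0 => (my.toSyn_monotone hbd).trans (not_lt.mp (hmin r ⟨hr, hr0⟩))) hFL
  refine ⟨q, a - mx.degree (sumAlgEquiv K σ τ b), _, ⟨b, hbB, rfl⟩, ?_⟩
  rw [leadingTerm, leadingTerm, monomial_mul, tsub_add_cancel_of_le hba, hq, mul_comm]

theorem isGroebnerBasis_iff (h : IsProdLex mo mx my)
    {J : Ideal (MvPolynomial (σ ⊕ τ) K)} {B : Set (MvPolynomial (σ ⊕ τ) K)} (hB : B ⊆ J) :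
    IsGroebnerBasis mo J B ↔
      IsStrongGroebnerBasis mx (J.map (sumAlgEquiv K σ τ)) (sumAlgEquiv K σ τ '' B) :=
  ⟨h.isStrongGroebnerBasis_map hB, h.isGroebnerBasis_of_isStrongGroebnerBasis_map hB⟩

end IsProdLex

end MonomialOrder

theorem stmt18_general {K : Type*} [Field K] {n s : ℕ}
    (mo : MonomialOrder (Fin n ⊕ Fin 1))
    (mx : MonomialOrder (Fin n)) (my : MonomialOrder (Fin 1))
    (horder : ∀ a b : (Fin n ⊕ Fin 1) →₀ ℕ,
      mo.toSyn a < mo.toSyn b ↔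
        (mx.toSyn (Finsupp.sumFinsuppEquivProdFinsupp a).1 <
            mx.toSyn (Finsupp.sumFinsuppEquivProdFinsupp b).1 ∨
          ((Finsupp.sumFinsuppEquivProdFinsupp a).1 =
              (Finsupp.sumFinsuppEquivProdFinsupp b).1 ∧
            my.toSyn (Finsupp.sumFinsuppEquivProdFinsupp a).2 <
              my.toSyn (Finsupp.sumFinsuppEquivProdFinsupp b).2)))
    (G : Fin s → MvPolynomial (Fin n ⊕ Fin 1) K) :
    (Ideal.span (mlt mo '' {f | f ∈ Ideal.span (Set.range G) ∧ f ≠ 0}) =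
        Ideal.span (mlt mo '' Set.range G)) ↔
      (∀ F ∈ Ideal.map (MvPolynomial.sumAlgEquiv K (Fin n) (Fin 1))
          (Ideal.span (Set.range G)), F ≠ 0 →
        ∃ (h : MvPolynomial (Fin 1) K) (α : Fin n →₀ ℕ) (i : Fin s),
          mlt mx F = MvPolynomial.monomial α h *
            mlt mx (MvPolynomial.sumAlgEquiv K (Fin n) (Fin 1) (G i))) := by
  rw [mlt_eq_leadingTerm, mlt_eq_leadingTerm]
  refine (MonomialOrder.IsProdLex.isGroebnerBasis_iff (my := my) horder Ideal.subset_span).trans ?_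
  simp only [IsStrongGroebnerBasis, ← Set.range_comp, Set.exists_range_iff, Function.comp_apply]

/-- over a field `K`, a finite set `G` of nonzero polynomials in
`T = K[y,x₁,…,x_n]` is a Gröbner basis of `J = ⟨G⟩` for an elimination order with
the x-variables larger than `y` if and only if its image is a strong Gröbner
basis of the image of `J` in `Q = (K[y])[x₁,…,x_n]`. -/
theorem stmt18 {K : Type*} [Field K] {n s : ℕ}
    (mo : MonomialOrder (Fin n ⊕ Fin 1))
    (mx : MonomialOrder (Fin n)) (my : MonomialOrder (Fin 1))
    (horder : ∀ a b : (Fin n ⊕ Fin 1) →₀ ℕ,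
      mo.toSyn a < mo.toSyn b ↔
        (mx.toSyn (Finsupp.sumFinsuppEquivProdFinsupp a).1 <
            mx.toSyn (Finsupp.sumFinsuppEquivProdFinsupp b).1 ∨
          ((Finsupp.sumFinsuppEquivProdFinsupp a).1 =
              (Finsupp.sumFinsuppEquivProdFinsupp b).1 ∧
            my.toSyn (Finsupp.sumFinsuppEquivProdFinsupp a).2 <
              my.toSyn (Finsupp.sumFinsuppEquivProdFinsupp b).2)))
    (G : Fin s → MvPolynomial (Fin n ⊕ Fin 1) K) (hG0 : ∀ i, G i ≠ 0) :
    (Ideal.span (mlt mo '' {f | f ∈ Ideal.span (Set.range G) ∧ f ≠ 0}) =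
        Ideal.span (mlt mo '' Set.range G)) ↔
      (∀ F ∈ Ideal.map (MvPolynomial.sumAlgEquiv K (Fin n) (Fin 1))
          (Ideal.span (Set.range G)), F ≠ 0 →
        ∃ (h : MvPolynomial (Fin 1) K) (α : Fin n →₀ ℕ) (i : Fin s),
          mlt mx F = MvPolynomial.monomial α h *
            mlt mx (MvPolynomial.sumAlgEquiv K (Fin n) (Fin 1) (G i))) :=
  stmt18_general mo mx my horder G
end
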